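/- For fixed s, t > 0 with st > 0 and κ > 0, the function F(x) := K₀(κ·√((s−t)² + s·t·x)) is strictly convex on (0, ∞). -/
import Mathlib

open MeasureTheory Set

/-- The modified Bessel function (Macdonald function) `K₀`, via its integral
representation `K₀(r) = ∫₀^∞ e^{−r cosh t} dt`. -/
noncomputable def besselK0 (r : ℝ) : ℝ :=
  ∫ t in Set.Ioi (0 : ℝ), Real.exp (-r * Real.cosh t)

/-- The modified Bessel function (Macdonald function) `K₁`, via its integral
representation `K₁(r) = ∫₀^∞ e^{−r cosh t} cosh t dt`. -/
noncomputable def besselK1 (r : ℝ) : ℝ :=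
  ∫ t in Set.Ioi (0 : ℝ), Real.exp (-r * Real.cosh t) * Real.cosh t

private lemma integrableOn_exp_cosh {r : ℝ} (hr : 0 < r) :
    IntegrableOn (fun u : ℝ => Real.exp (-r * Real.cosh u)) (Set.Ioi 0) := by
  apply MeasureTheory.Integrable.mono (exp_neg_integrableOn_Ioi 0 hr)
  · exact ((Real.continuous_exp.comp ((continuous_const.mul Real.continuous_cosh)))).aestronglyMeasurable
  · filter_upwards [ae_restrict_mem measurableSet_Ioi] with u hu
    rw [Real.norm_eq_abs, Real.norm_eq_abs, abs_of_pos (Real.exp_pos _),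
      abs_of_pos (Real.exp_pos _), Real.exp_le_exp]
    have h1 : u < Real.sinh u := Real.self_lt_sinh_iff.mpr hu
    have h2 : Real.sinh u < Real.cosh u := Real.sinh_lt_cosh u
    nlinarith

/-- For fixed `s, t, κ > 0`, the function `x ↦ K₀(κ√((s−t)² + stx))` is strictly
convex on `(0, ∞)`. -/
theorem besselK0_profile_strictConvex (s t κ : ℝ) (hs : 0 < s) (ht : 0 < t)
    (hst : 0 < s * t) (hκ : 0 < κ) :
    StrictConvexOn ℝ (Set.Ioi 0)
      (fun x : ℝ => besselK0 (κ * Real.sqrt ((s - t) ^ 2 + s * t * x))) := by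
  set A : ℝ := (s - t) ^ 2 with hA
  have hA0 : 0 ≤ A := sq_nonneg _
  refine ⟨convex_Ioi 0, ?_⟩
  intro x hx y hy hxy a b ha hb hab
  simp only [smul_eq_mul]
  set u : ℝ := A + s * t * x with hu'
  set v : ℝ := A + s * t * y with hv'
  have hu : 0 < u := add_pos_of_nonneg_of_pos hA0 (mul_pos hst hx)
  have hv : 0 < v := add_pos_of_nonneg_of_pos hA0 (mul_pos hst hy)
  have huv : u ≠ v := by
    intro h
    apply hxy
    have : s * t * x = s * t * y := by simpa [hu', hv'] using h
    exact mul_left_cancel₀ (ne_of_gt hst) this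
  have hm : A + s * t * (a * x + b * y) = a * u + b * v := by
    simp only [hu', hv']; linear_combination A * hab.symm
  have hmpos : 0 < a * u + b * v := by positivity
  -- strict concavity of sqrt
  have hsqrt : a * Real.sqrt u + b * Real.sqrt v < Real.sqrt (a * u + b * v) := by
    have := Real.strictConcaveOn_sqrt.2 (mem_Ici.mpr hu.le) (mem_Ici.mpr hv.le) huv ha hb hab
    simpa using this
  have hsu : 0 < Real.sqrt u := Real.sqrt_pos.mpr hu
  have hsv : 0 < Real.sqrt v := Real.sqrt_pos.mpr hv
  have hsm : 0 < Real.sqrt (a * u + b * v) := Real.sqrt_pos.mpr hmpos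
  -- the three integrands
  set fm : ℝ → ℝ := fun τ => Real.exp (-(κ * Real.sqrt (a * u + b * v)) * Real.cosh τ) with hfm
  set fu : ℝ → ℝ := fun τ => Real.exp (-(κ * Real.sqrt u) * Real.cosh τ) with hfu
  set fv : ℝ → ℝ := fun τ => Real.exp (-(κ * Real.sqrt v) * Real.cosh τ) with hfv
  have hifm : IntegrableOn fm (Set.Ioi 0) := integrableOn_exp_cosh (by positivity)
  have hifu : IntegrableOn fu (Set.Ioi 0) := integrableOn_exp_cosh (by positivity)
  have hifv : IntegrableOn fv (Set.Ioi 0) := integrableOn_exp_cosh (by positivity)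
  -- pointwise strict inequality on Ioi 0 (indeed everywhere)
  have key : ∀ τ : ℝ, fm τ < a * fu τ + b * fv τ := by
    intro τ
    have hc : 0 < κ * Real.cosh τ := mul_pos hκ (Real.cosh_pos τ)
    have step1 : fm τ < Real.exp (a * (-(κ * Real.sqrt u) * Real.cosh τ)
        + b * (-(κ * Real.sqrt v) * Real.cosh τ)) := by
      rw [hfm, Real.exp_lt_exp]
      nlinarith [hsqrt, hc]
    have step2 : Real.exp (a * (-(κ * Real.sqrt u) * Real.cosh τ)
        + b * (-(κ * Real.sqrt v) * Real.cosh τ)) ≤ a * fu τ + b * fv τ := by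
      have := convexOn_exp.2 (mem_univ (-(κ * Real.sqrt u) * Real.cosh τ))
        (mem_univ (-(κ * Real.sqrt v) * Real.cosh τ)) ha.le hb.le hab
      simpa [smul_eq_mul, hfu, hfv] using this
    exact step1.trans_le step2
  -- integrate
  have hig : IntegrableOn (fun τ => a * fu τ + b * fv τ) (Set.Ioi 0) :=
    (hifu.const_mul a).add (hifv.const_mul b)
  have hpos : 0 < ∫ τ in Set.Ioi (0:ℝ), (a * fu τ + b * fv τ - fm τ) := by
    rw [setIntegral_pos_iff_support_of_nonneg_ae]
    · have hsub : Set.Ioi (0:ℝ) ⊆ Function.support (fun τ => a * fu τ + b * fv τ - fm τ) := by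
        intro τ _
        exact ne_of_gt (sub_pos.mpr (key τ))
      calc (0:ENNReal) < volume (Set.Ioi (0:ℝ)) := by simp
        _ ≤ volume (Function.support (fun τ => a * fu τ + b * fv τ - fm τ) ∩ Set.Ioi 0) := by
            apply measure_mono; intro τ hτ; exact ⟨hsub hτ, hτ⟩
    · filter_upwards with τ
      exact sub_nonneg.mpr (key τ).le
    · exact hig.sub hifm
  rw [integral_sub hig hifm, integral_add (hifu.const_mul a) (hifv.const_mul b),
    integral_const_mul, integral_const_mul, sub_pos] at hpos
  have e1 : besselK0 (κ * Real.sqrt (A + s * t * (a * x + b * y)))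
      = ∫ τ in Set.Ioi (0:ℝ), fm τ := by rw [hm]; rfl
  have e2 : besselK0 (κ * Real.sqrt u) = ∫ τ in Set.Ioi (0:ℝ), fu τ := rfl
  have e3 : besselK0 (κ * Real.sqrt v) = ∫ τ in Set.Ioi (0:ℝ), fv τ := rfl
  rw [e1, e2, e3]; exact hpos
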